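/- arXiv:2005.00345 — 3 statements merged into one kernel-verified Lean document; each statement's English description precedes it below -/
import Mathlib

section
/- Let E be a real Hilbert space, K ⊆ E a nonempty closed convex set, and Φ : E → E a map that is M-strongly monotone and L-Lipschitz on K with 0 < M and 0 < L. If 0 < ε < 2M/L², then the map T : K → K defined by T(x) = proj_K(x − εΦ(x)) is a contraction on K with Lipschitz constant √(1 − 2εM + ε²L²) < 1, and hence has a unique fixed point x* ∈ K. -/
open scoped RealInnerProductSpace

/-- `P` is the metric projection onto the nonempty closed convex set `K`:
for every `u`, `P u ∈ K` and `⟪u - P u, x - P u⟫ ≤ 0` for all `x ∈ K`. -/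
def IsMetricProjection {E : Type*} [NormedAddCommGroup E] [InnerProductSpace ℝ E]
    (K : Set E) (P : E → E) : Prop :=
  ∀ u : E, P u ∈ K ∧ ∀ x ∈ K, ⟪u - P u, x - P u⟫ ≤ 0

/-- If `Φ` is `M`-strongly monotone and `L`-Lipschitz on a nonempty closed convex set `K`
of a real Hilbert space and `0 < ε < 2M/L²`, then `T(x) = proj_K(x - εΦ(x))` is a contraction
on `K` with Lipschitz constant `√(1 - 2εM + ε²L²) < 1`, and has a unique fixed point in `K`. -/
theorem projected_gradient_contraction_and_unique_fixed_point
    {E : Type*} [NormedAddCommGroup E] [InnerProductSpace ℝ E] [CompleteSpace E]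
    (K : Set E) (hne : K.Nonempty) (hcl : IsClosed K) (hconv : Convex ℝ K)
    (P : E → E) (hP : IsMetricProjection K P)
    (Φ : E → E) (M L ε : ℝ) (hM : 0 < M) (hL : 0 < L)
    (hmono : ∀ x ∈ K, ∀ y ∈ K, M * ‖x - y‖ ^ 2 ≤ ⟪Φ x - Φ y, x - y⟫)
    (hlip : ∀ x ∈ K, ∀ y ∈ K, ‖Φ x - Φ y‖ ≤ L * ‖x - y‖)
    (hε0 : 0 < ε) (hε : ε < 2 * M / L ^ 2) :
    (Real.sqrt (1 - 2 * ε * M + ε ^ 2 * L ^ 2) < 1 ∧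
      ∀ x ∈ K, ∀ y ∈ K,
        ‖P (x - ε • Φ x) - P (y - ε • Φ y)‖ ≤
          Real.sqrt (1 - 2 * ε * M + ε ^ 2 * L ^ 2) * ‖x - y‖) ∧
    ∃! z : E, z ∈ K ∧ P (z - ε • Φ z) = z := by
  set c2 : ℝ := 1 - 2 * ε * M + ε ^ 2 * L ^ 2 with hc2def
  -- P is nonexpansive
  have hPne : ∀ u v : E, ‖P u - P v‖ ≤ ‖u - v‖ := by
    intro u v
    have h1 := (hP u).2 (P v) (hP v).1
    have h2 := (hP v).2 (P u) (hP u).1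
    have key : ‖P u - P v‖ ^ 2 ≤ ⟪u - v, P u - P v⟫ := by
      have e1 : ⟪P u - P v, P u - P v⟫ - ⟪u - v, P u - P v⟫ =
          ⟪u - P u, P v - P u⟫ + ⟪v - P v, P u - P v⟫ := by
        simp only [inner_sub_left, inner_sub_right]
        ring
      have := real_inner_self_eq_norm_sq (P u - P v)
      nlinarith [h1, h2]
    have hcs := real_inner_le_norm (u - v) (P u - P v)
    nlinarith [norm_nonneg (P u - P v), norm_nonneg (u - v)]
  have c2lt1 : c2 < 1 := by
    have h : ε * L ^ 2 < 2 * M := (lt_div_iff₀ (pow_pos hL 2)).mp hε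
    nlinarith
  have hsqrt1 : Real.sqrt c2 < 1 := by
    rcases le_or_gt 0 c2 with h | h
    · calc Real.sqrt c2 < Real.sqrt 1 := Real.sqrt_lt_sqrt h c2lt1
        _ = 1 := Real.sqrt_one
    · rw [Real.sqrt_eq_zero_of_nonpos h.le]; norm_num
  have hcontr : ∀ x ∈ K, ∀ y ∈ K,
      ‖P (x - ε • Φ x) - P (y - ε • Φ y)‖ ≤ Real.sqrt c2 * ‖x - y‖ := by
    intro x hx y hy
    by_cases hxy : x = y
    · simp [hxy]
    have hnorm2 : ‖(x - ε • Φ x) - (y - ε • Φ y)‖ ^ 2 ≤ c2 * ‖x - y‖ ^ 2 := by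
      have e : (x - ε • Φ x) - (y - ε • Φ y) = (x - y) - ε • (Φ x - Φ y) := by
        module
      rw [e]
      have expand : ‖(x - y) - ε • (Φ x - Φ y)‖ ^ 2 =
          ‖x - y‖ ^ 2 - 2 * ε * ⟪Φ x - Φ y, x - y⟫ + ε ^ 2 * ‖Φ x - Φ y‖ ^ 2 := by
        rw [norm_sub_sq_real, norm_smul, real_inner_smul_right]
        simp [Real.norm_eq_abs, abs_of_pos hε0]
        rw [real_inner_comm]
        ring
      rw [expand]
      have h1 := hmono x hx y hy
      have h2 := hlip x hx y hy
      have hL2 : ‖Φ x - Φ y‖ ^ 2 ≤ L ^ 2 * ‖x - y‖ ^ 2 := by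
        nlinarith [norm_nonneg (Φ x - Φ y), norm_nonneg (x - y)]
      nlinarith [sq_nonneg ε]
    have hxyne : (0:ℝ) < ‖x - y‖ := by
      rw [norm_pos_iff, sub_ne_zero]; exact hxy
    have hc2nn : 0 ≤ c2 := by
      nlinarith [hnorm2, sq_nonneg ‖x - ε • Φ x - (y - ε • Φ y)‖, pow_pos hxyne 2]
    calc ‖P (x - ε • Φ x) - P (y - ε • Φ y)‖
        ≤ ‖(x - ε • Φ x) - (y - ε • Φ y)‖ := hPne _ _
      _ = Real.sqrt (‖(x - ε • Φ x) - (y - ε • Φ y)‖ ^ 2) := by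
          rw [Real.sqrt_sq (norm_nonneg _)]
      _ ≤ Real.sqrt (c2 * ‖x - y‖ ^ 2) := Real.sqrt_le_sqrt hnorm2
      _ = Real.sqrt c2 * ‖x - y‖ := by
          rw [Real.sqrt_mul hc2nn, Real.sqrt_sq (norm_nonneg _)]
  refine ⟨⟨hsqrt1, hcontr⟩, ?_⟩
  -- Banach fixed point on the subtype K
  haveI : CompleteSpace K := hcl.completeSpace_coe
  haveI : Nonempty K := hne.to_subtype
  set T : K → K := fun x => ⟨P ((x : E) - ε • Φ x), (hP _).1⟩ with hT
  set c : NNReal := ⟨Real.sqrt c2, Real.sqrt_nonneg _⟩ with hc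
  have hclt : c < 1 := by
    rw [← NNReal.coe_lt_coe]; exact hsqrt1
  have hlipT : LipschitzWith c T := by
    apply LipschitzWith.of_dist_le_mul
    intro x y
    simp only [hT, Subtype.dist_eq, dist_eq_norm]
    exact hcontr x x.2 y y.2
  have hcw : ContractingWith c T := ⟨hclt, hlipT⟩
  set z : K := ContractingWith.fixedPoint T hcw with hz
  have hzfix : T z = z := hcw.fixedPoint_isFixedPt
  refine ⟨(z : E), ⟨z.2, congrArg Subtype.val hzfix⟩, ?_⟩
  rintro w ⟨hwK, hwfix⟩
  have hzE : P ((z : E) - ε • Φ (z : E)) = (z : E) := congrArg Subtype.val hzfix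
  have hb := hcontr w hwK (z : E) z.2
  rw [hwfix, hzE] at hb
  have : ‖w - (z : E)‖ = 0 := by
    nlinarith [norm_nonneg (w - (z : E))]
  have := norm_eq_zero.mp this
  exact sub_eq_zero.mp this
end

section
/- Let E be a real Hilbert space, K ⊆ E a nonempty closed convex set, Φ : E → E M-strongly monotone and L-Lipschitz on K with 0 < M, 0 < L, and 0 < ε < 2M/L². If x* ∈ K is the fixed point of x ↦ proj_K(x − εΦ(x)) and x^{k+1} = proj_K(x^k − εΦ(x^k)) with x⁰ ∈ K, then for all k ≥ 0, ‖x^k − x*‖² ≤ (1 − 2εM + ε²L²)^k ‖x⁰ − x*‖², i.e. the iterates converge geometrically with squared contraction factor Δ = 1 − 2εM + ε²L². -/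
open scoped RealInnerProductSpace

lemma metricProj_nonexpansive {E : Type*} [NormedAddCommGroup E] [InnerProductSpace ℝ E]
    {K : Set E} {P : E → E} (hP : IsMetricProjection K P) (u v : E) :
    ‖P u - P v‖ ≤ ‖u - v‖ := by
  obtain ⟨hu, hu'⟩ := hP u
  obtain ⟨hv, hv'⟩ := hP v
  have h1 := hu' (P v) hv
  have h2 := hv' (P u) hu
  have key : ‖P u - P v‖ ^ 2 ≤ ⟪u - v, P u - P v⟫ := by
    have expand : ⟪u - P u, P v - P u⟫ + ⟪v - P v, P u - P v⟫
        = -⟪u - v, P u - P v⟫ + ‖P u - P v‖ ^ 2 := by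
      simp only [inner_sub_left, inner_sub_right]
      have := real_inner_self_eq_norm_sq (P u - P v)
      simp only [inner_sub_left, inner_sub_right] at this
      linarith [this, real_inner_comm u (P v), real_inner_comm v (P u),
        real_inner_comm (P u) (P v)]
    nlinarith
  have cs := real_inner_le_norm (u - v) (P u - P v)
  nlinarith [norm_nonneg (P u - P v), norm_nonneg (u - v)]

/-- Geometric convergence of the projected gradient iteration: with squared contraction factor
`Δ = 1 - 2εM + ε²L²`, the iterates satisfy `‖x^k - x*‖² ≤ Δ^k ‖x⁰ - x*‖²` for all `k ≥ 0`. -/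
theorem projected_gradient_geometric_rate
    {E : Type*} [NormedAddCommGroup E] [InnerProductSpace ℝ E] [CompleteSpace E]
    (K : Set E) (hne : K.Nonempty) (hcl : IsClosed K) (hconv : Convex ℝ K)
    (P : E → E) (hP : IsMetricProjection K P)
    (Φ : E → E) (M L ε : ℝ) (hM : 0 < M) (hL : 0 < L)
    (hmono : ∀ x ∈ K, ∀ y ∈ K, M * ‖x - y‖ ^ 2 ≤ ⟪Φ x - Φ y, x - y⟫)
    (hlip : ∀ x ∈ K, ∀ y ∈ K, ‖Φ x - Φ y‖ ≤ L * ‖x - y‖)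
    (hε0 : 0 < ε) (hε : ε < 2 * M / L ^ 2)
    (xs : E) (hxsK : xs ∈ K) (hxs : P (xs - ε • Φ xs) = xs)
    (x : ℕ → E) (hx0 : x 0 ∈ K)
    (hiter : ∀ k : ℕ, x (k + 1) = P (x k - ε • Φ (x k))) :
    ∀ k : ℕ, ‖x k - xs‖ ^ 2 ≤ (1 - 2 * ε * M + ε ^ 2 * L ^ 2) ^ k * ‖x 0 - xs‖ ^ 2 := by
  set Δ : ℝ := 1 - 2 * ε * M + ε ^ 2 * L ^ 2 with hΔdef
  -- all iterates lie in K
  have hK : ∀ k, x k ∈ K := by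
    intro k
    cases k with
    | zero => exact hx0
    | succ n => rw [hiter n]; exact (hP _).1
  -- one-step contraction estimate
  have hstep : ∀ k, ‖x (k + 1) - xs‖ ^ 2 ≤ Δ * ‖x k - xs‖ ^ 2 := by
    intro k
    have hnonexp := metricProj_nonexpansive hP (x k - ε • Φ (x k)) (xs - ε • Φ xs)
    rw [hxs] at hnonexp
    rw [hiter k]
    have hdiff : (x k - ε • Φ (x k)) - (xs - ε • Φ xs)
        = (x k - xs) - ε • (Φ (x k) - Φ xs) := by
      rw [smul_sub]; abel
    rw [hdiff] at hnonexp
    set a := x k - xs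
    set d := Φ (x k) - Φ xs
    have hexp : ‖a - ε • d‖ ^ 2 = ‖a‖ ^ 2 - 2 * ε * ⟪d, a⟫ + ε ^ 2 * ‖d‖ ^ 2 := by
      rw [norm_sub_sq_real, real_inner_smul_right, real_inner_comm a d, norm_smul]
      rw [Real.norm_eq_abs, mul_pow, sq_abs]
      ring
    have hm := hmono (x k) (hK k) xs hxsK
    have hl := hlip (x k) (hK k) xs hxsK
    have hl2 : ‖d‖ ^ 2 ≤ L ^ 2 * ‖a‖ ^ 2 := by
      have := mul_self_le_mul_self (norm_nonneg d) hl
      nlinarith [norm_nonneg a, norm_nonneg d]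
    have hsq : ‖P (x k - ε • Φ (x k)) - xs‖ ^ 2 ≤ ‖a - ε • d‖ ^ 2 := by
      have h0 : (0:ℝ) ≤ ‖P (x k - ε • Φ (x k)) - xs‖ := norm_nonneg _
      nlinarith
    rw [hexp] at hsq
    nlinarith [sq_nonneg ε, hε0.le]
  intro k
  induction k with
  | zero => simp
  | succ k ih =>
    by_cases hΔpos : 0 ≤ Δ
    · calc ‖x (k + 1) - xs‖ ^ 2 ≤ Δ * ‖x k - xs‖ ^ 2 := hstep k
        _ ≤ Δ * (Δ ^ k * ‖x 0 - xs‖ ^ 2) := mul_le_mul_of_nonneg_left ih hΔpos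
        _ = Δ ^ (k + 1) * ‖x 0 - xs‖ ^ 2 := by ring
    · push_neg at hΔpos
      have hz : ‖x 0 - xs‖ ^ 2 = 0 := by
        nlinarith [hstep 0, sq_nonneg ‖x 1 - xs‖, sq_nonneg ‖x 0 - xs‖]
      have hzk : ‖x k - xs‖ ^ 2 = 0 := by
        have := ih
        rw [hz, mul_zero] at this
        exact le_antisymm this (sq_nonneg _)
      have := hstep k
      rw [hzk, mul_zero] at this
      rw [hz, mul_zero]
      exact this
end

section
/- (Theorem 2, stochastic limsup bound) Let E be a real Hilbert space, K ⊆ E nonempty closed convex, Φ : E → E M-strongly monotone and L-Lipschitz on K with 0 < M, 0 < L, 0 < ε < 2M/L², and let x* ∈ K be the fixed point of x ↦ proj_K(x − εΦ(x)). Suppose the stochastic iteration X^{k+1} = proj_K(X^k − εΨ_k(X^k)) uses random operators Ψ_k whose errors are conditionally unbiased, E[Ψ_k(X^k) | X^k] = Φ(X^k), and satisfy E[‖Ψ_k(X^k) − Φ(X^k)‖²] ≤ β for all k. Then lim sup_{k→∞} E[‖X^k − x*‖²] ≤ ε²β / (2εM − ε²L²) = β / (2M/ε − L²). -/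
/-!
With `D = (x - εΦ x) - (x* - εΦ x*)` and `e = Ψ - Φ x`, the fixed-point identity
`x* = P (x* - εΦ x*)` and nonexpansiveness of `P` give
`‖P (x - εΨ) - x*‖² ≤ ‖D‖² - 2ε⟪D, e⟫ + ε²‖e‖²`, while strong monotonicity and Lipschitz
continuity give `‖D‖² ≤ c ‖x - x*‖²` with `c = 1 - 2εM + ε²L² < 1`. Along the iteration `D` is a
function of `X k`, so conditional unbiasedness kills `E⟪D, e⟫`, and `a k = E‖X k - x*‖²` obeys
`a (k + 1) ≤ c a k + ε²β`, whence `limsup a ≤ ε²β / (1 - c)`.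

The pull-out step needs `D` to be strongly measurable for `σ(X k)` although `E` need not be
separable: `Φ` is bi-Lipschitz on `K`, hence an embedding, and `Φ ∘ X k` agrees a.e. with the
`σ(X k)`-strongly measurable `E[Ψ k (X k) | X k]`, so `X k` is a.e. separably valued.
-/

open scoped RealInnerProductSpace
open MeasureTheory

open Filter Topology TopologicalSpace

namespace IsMetricProjection

variable {E : Type*} [NormedAddCommGroup E] [InnerProductSpace ℝ E] {K : Set E} {P : E → E}

theorem mem (hP : IsMetricProjection K P) (u : E) : P u ∈ K := (hP u).1

theorem norm_sub_le (hP : IsMetricProjection K P) (u v : E) : ‖P u - P v‖ ≤ ‖u - v‖ := by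
  have hu := (hP u).2 (P v) (hP.mem v)
  have hv := (hP v).2 (P u) (hP.mem u)
  have hsq : ‖P u - P v‖ ^ 2 ≤ ⟪u - v, P u - P v⟫ := by
    have : ⟪u - P u, P v - P u⟫ + ⟪v - P v, P u - P v⟫ =
        ‖P u - P v‖ ^ 2 - ⟪u - v, P u - P v⟫ := by
      rw [← real_inner_self_eq_norm_sq]
      simp only [inner_sub_left, inner_sub_right, real_inner_comm]
      ring
    linarith
  nlinarith [real_inner_le_norm (u - v) (P u - P v), norm_nonneg (P u - P v), norm_nonneg (u - v)]

theorem inner_nonneg_of_map_sub_smul_eq (hP : IsMetricProjection K P) {y v : E} {ε : ℝ}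
    (hε : 0 < ε) (hy : P (y - ε • v) = y) {x : E} (hx : x ∈ K) : 0 ≤ ⟪v, x - y⟫ := by
  have h := (hP (y - ε • v)).2 x hx
  rw [hy, sub_sub_cancel_left, inner_neg_left, real_inner_smul_left] at h
  nlinarith

end IsMetricProjection

section StronglyMonotone

variable {E : Type*} [NormedAddCommGroup E] [InnerProductSpace ℝ E] {K : Set E} {Φ : E → E}
  {M L : ℝ} {x y : E}

theorem mul_norm_sub_le_norm_map_sub
    (hmono : ∀ x ∈ K, ∀ y ∈ K, M * ‖x - y‖ ^ 2 ≤ ⟪Φ x - Φ y, x - y⟫) (hx : x ∈ K) (hy : y ∈ K) :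
    M * ‖x - y‖ ≤ ‖Φ x - Φ y‖ := by
  rcases (norm_nonneg (x - y)).eq_or_lt with hxy | hxy
  · rw [← hxy, mul_zero]
    exact norm_nonneg _
  · refine le_of_mul_le_mul_right ?_ hxy
    calc M * ‖x - y‖ * ‖x - y‖ = M * ‖x - y‖ ^ 2 := by ring
      _ ≤ ⟪Φ x - Φ y, x - y⟫ := hmono x hx y hy
      _ ≤ ‖Φ x - Φ y‖ * ‖x - y‖ := real_inner_le_norm _ _

theorem le_of_stronglyMonotoneOn_of_lipschitzOn
    (hmono : ∀ x ∈ K, ∀ y ∈ K, M * ‖x - y‖ ^ 2 ≤ ⟪Φ x - Φ y, x - y⟫)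
    (hlip : ∀ x ∈ K, ∀ y ∈ K, ‖Φ x - Φ y‖ ≤ L * ‖x - y‖) (hx : x ∈ K) (hy : y ∈ K)
    (hxy : x ≠ y) : M ≤ L :=
  le_of_mul_le_mul_right ((mul_norm_sub_le_norm_map_sub hmono hx hy).trans (hlip x hx y hy))
    (norm_pos_iff.2 (sub_ne_zero.2 hxy))

theorem isEmbedding_domRestrict_of_stronglyMonotoneOn (hM : 0 < M)
    (hmono : ∀ x ∈ K, ∀ y ∈ K, M * ‖x - y‖ ^ 2 ≤ ⟪Φ x - Φ y, x - y⟫)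
    (hlip : ∀ x ∈ K, ∀ y ∈ K, ‖Φ x - Φ y‖ ≤ L * ‖x - y‖) :
    IsEmbedding (K.domRestrict Φ) := by
  have hanti : AntilipschitzWith (Real.toNNReal M⁻¹) (K.domRestrict Φ) := by
    refine AntilipschitzWith.of_le_mul_dist fun p q => ?_
    rw [Real.coe_toNNReal _ (inv_nonneg.2 hM.le), Subtype.dist_eq, dist_eq_norm, dist_eq_norm,
      ← div_eq_inv_mul, le_div_iff₀' hM]
    exact mul_norm_sub_le_norm_map_sub hmono p.2 q.2
  have hcont : Continuous (K.domRestrict Φ) := by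
    refine (LipschitzWith.of_dist_le_mul (K := Real.toNNReal L) fun p q => ?_).continuous
    rw [Subtype.dist_eq, dist_eq_norm, dist_eq_norm]
    exact (hlip p p.2 q q.2).trans (mul_le_mul_of_nonneg_right (Real.le_coe_toNNReal L)
      (norm_nonneg _))
  exact hanti.isEmbedding hcont

theorem eq_of_stronglyMonotoneOn_of_map_eq_zero (hM : 0 < M)
    (hmono : ∀ x ∈ K, ∀ y ∈ K, M * ‖x - y‖ ^ 2 ≤ ⟪Φ x - Φ y, x - y⟫) (hx : x ∈ K) (hy : y ∈ K)
    (hvi : 0 ≤ ⟪Φ y, x - y⟫) (hΦx : Φ x = 0) : x = y := by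
  have h := hmono x hx y hy
  rw [hΦx, zero_sub, inner_neg_left] at h
  have hsq : ‖x - y‖ ^ 2 = 0 := le_antisymm (by nlinarith) (sq_nonneg _)
  simpa [sub_eq_zero] using hsq

theorem norm_sub_smul_sub_sq_le {ε : ℝ} (hε : 0 ≤ ε)
    (hmono : ∀ x ∈ K, ∀ y ∈ K, M * ‖x - y‖ ^ 2 ≤ ⟪Φ x - Φ y, x - y⟫)
    (hlip : ∀ x ∈ K, ∀ y ∈ K, ‖Φ x - Φ y‖ ≤ L * ‖x - y‖) (hx : x ∈ K) (hy : y ∈ K) :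
    ‖(x - ε • Φ x) - (y - ε • Φ y)‖ ^ 2 ≤ (1 - 2 * ε * M + ε ^ 2 * L ^ 2) * ‖x - y‖ ^ 2 := by
  have hlip2 : ‖Φ x - Φ y‖ ^ 2 ≤ L ^ 2 * ‖x - y‖ ^ 2 := by
    rw [← mul_pow]
    exact pow_le_pow_left₀ (norm_nonneg _) (hlip x hx y hy) 2
  have hmono' := hmono x hx y hy
  rw [real_inner_comm] at hmono'
  calc ‖(x - ε • Φ x) - (y - ε • Φ y)‖ ^ 2
      = ‖x - y‖ ^ 2 - 2 * ε * ⟪x - y, Φ x - Φ y⟫ + ε ^ 2 * ‖Φ x - Φ y‖ ^ 2 := by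
        rw [sub_sub_sub_comm, ← smul_sub, norm_sub_sq_real, real_inner_smul_right, norm_smul,
          Real.norm_of_nonneg hε]
        ring
    _ ≤ (1 - 2 * ε * M + ε ^ 2 * L ^ 2) * ‖x - y‖ ^ 2 := by
        nlinarith [mul_le_mul_of_nonneg_left hlip2 (sq_nonneg ε),
          mul_le_mul_of_nonneg_left hmono' hε]

end StronglyMonotone

theorem limsup_le_div_of_le_mul_add {a : ℕ → ℝ} {b c : ℝ} (ha : ∀ k, 0 ≤ a k) (hc0 : 0 ≤ c)
    (hc1 : c < 1) (hrec : ∀ k, a (k + 1) ≤ c * a k + b) : limsup a atTop ≤ b / (1 - c) := by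
  set B := b / (1 - c)
  have hB : c * B + b = B := by
    simp only [B]
    field_simp [(sub_pos.2 hc1).ne']
    ring
  have hbound : ∀ k, a k ≤ c ^ k * (a 0 - B) + B := by
    intro k
    induction k with
    | zero => simp
    | succ k ih =>
      calc a (k + 1) ≤ c * a k + b := hrec k
        _ ≤ c * (c ^ k * (a 0 - B) + B) + b := by gcongr
        _ = c ^ (k + 1) * (a 0 - B) + B := by linear_combination hB
  have hlim : Tendsto (fun k => c ^ k * (a 0 - B) + B) atTop (𝓝 B) := by
    simpa using ((tendsto_pow_atTop_nhds_zero_of_lt_one hc0 hc1).mul_const (a 0 - B)).add_const B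
  calc limsup a atTop ≤ limsup (fun k => c ^ k * (a 0 - B) + B) atTop :=
        limsup_le_limsup (Eventually.of_forall hbound)
          (isCoboundedUnder_le_of_eventually_le _ (Eventually.of_forall ha))
          hlim.isBoundedUnder_le
    _ = B := hlim.limsup_eq

theorem aestronglyMeasurable_of_ae_mem_isSeparable {Ω β : Type*} {m mΩ : MeasurableSpace Ω}
    {μ : Measure Ω} [TopologicalSpace β] [PseudoMetrizableSpace β] [MeasurableSpace β]
    [BorelSpace β] {f : Ω → β} (hf : Measurable[m] f) {t : Set β} (ht : IsSeparable t)
    (hft : ∀ᵐ ω ∂μ, f ω ∈ t) : AEStronglyMeasurable[m] f μ := by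
  classical
  rcases t.eq_empty_or_nonempty with rfl | ⟨y, hy⟩
  · simp only [Set.mem_empty_iff_false, eventually_false_iff_eq_bot, ae_eq_bot] at hft
    exact hft ▸ aestronglyMeasurable_zero_measure f
  have hS : MeasurableSet[m] (f ⁻¹' closure t) := hf isClosed_closure.measurableSet
  refine ⟨(f ⁻¹' closure t).piecewise f fun _ => y,
    stronglyMeasurable_iff_measurable_separable.2
      ⟨hf.piecewise hS measurable_const, ht.closure.mono ?_⟩, ?_⟩
  · rintro _ ⟨ω, rfl⟩
    by_cases hω : ω ∈ f ⁻¹' closure t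
    · simpa [Set.piecewise_eq_of_mem _ _ _ hω] using hω
    · simpa [Set.piecewise_eq_of_notMem _ _ _ hω] using subset_closure hy
  · filter_upwards [hft] with ω hω
    exact (Set.piecewise_eq_of_mem _ _ _
      (show ω ∈ f ⁻¹' closure t from subset_closure hω)).symm

theorem integral_inner_eq_zero_of_condExp_ae_eq_zero {Ω E : Type*} [NormedAddCommGroup E]
    [InnerProductSpace ℝ E] [CompleteSpace E] {m mΩ : MeasurableSpace Ω}
    {μ : Measure Ω} [IsFiniteMeasure μ] (hm : m ≤ mΩ) {f g : Ω → E}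
    (hf : AEStronglyMeasurable[m] f μ) (hg : Integrable g μ)
    (hfg : Integrable (fun ω => ⟪f ω, g ω⟫) μ) (hg0 : μ[g | m] =ᵐ[μ] 0) :
    ∫ ω, ⟪f ω, g ω⟫ ∂μ = 0 := by
  have : IsFiniteMeasure (μ.trim hm) := isFiniteMeasure_trim hm
  rw [← integral_condExp hm]
  refine integral_eq_zero_of_ae ?_
  filter_upwards [condExp_bilin_of_aestronglyMeasurable_left (innerSL ℝ) hf hfg hg, hg0]
    with ω hpull hzero
  exact hpull.trans (by simp [hzero])

theorem norm_proj_sub_sq_le {E : Type*} [NormedAddCommGroup E] [InnerProductSpace ℝ E]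
    {K : Set E} {P : E → E} {Φ : E → E} {M L ε : ℝ} {xs x : E} (hP : IsMetricProjection K P)
    (hmono : ∀ x ∈ K, ∀ y ∈ K, M * ‖x - y‖ ^ 2 ≤ ⟪Φ x - Φ y, x - y⟫)
    (hlip : ∀ x ∈ K, ∀ y ∈ K, ‖Φ x - Φ y‖ ≤ L * ‖x - y‖) (hε : 0 ≤ ε)
    (hxsK : xs ∈ K) (hxs : P (xs - ε • Φ xs) = xs) (hx : x ∈ K) (ψ : E) :
    ‖P (x - ε • ψ) - xs‖ ^ 2 ≤ (1 - 2 * ε * M + ε ^ 2 * L ^ 2) * ‖x - xs‖ ^ 2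
      - 2 * ε * ⟪(x - ε • Φ x) - (xs - ε • Φ xs), ψ - Φ x⟫ + ε ^ 2 * ‖ψ - Φ x‖ ^ 2 := by
  set D := (x - ε • Φ x) - (xs - ε • Φ xs)
  have hnonexp : ‖P (x - ε • ψ) - xs‖ ≤ ‖D - ε • (ψ - Φ x)‖ :=
    calc ‖P (x - ε • ψ) - xs‖ = ‖P (x - ε • ψ) - P (xs - ε • Φ xs)‖ := by rw [hxs]
      _ ≤ ‖(x - ε • ψ) - (xs - ε • Φ xs)‖ := hP.norm_sub_le _ _
      _ = ‖D - ε • (ψ - Φ x)‖ := by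
        congr 1
        simp only [D, smul_sub]
        abel
  calc ‖P (x - ε • ψ) - xs‖ ^ 2 ≤ ‖D - ε • (ψ - Φ x)‖ ^ 2 :=
        pow_le_pow_left₀ (norm_nonneg _) hnonexp 2
    _ = ‖D‖ ^ 2 - 2 * ε * ⟪D, ψ - Φ x⟫ + ε ^ 2 * ‖ψ - Φ x‖ ^ 2 := by
        rw [norm_sub_sq_real, real_inner_smul_right, norm_smul, Real.norm_of_nonneg hε]
        ring
    _ ≤ _ := by linarith [norm_sub_smul_sub_sq_le hε hmono hlip hx hxsK]

section StochasticStep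

variable {E : Type*} [NormedAddCommGroup E] [InnerProductSpace ℝ E] [CompleteSpace E]
  [MeasurableSpace E] [BorelSpace E] {K : Set E} {P : E → E} {Φ : E → E} {M L ε β : ℝ} {xs : E}
  {Ω : Type*} {m mΩ : MeasurableSpace Ω} {μ : Measure Ω} [IsFiniteMeasure μ] {Y G : Ω → E}

theorem integrable_and_integral_inner_step_err_eq_zero (hP : IsMetricProjection K P)
    (hM : 0 < M)
    (hmono : ∀ x ∈ K, ∀ y ∈ K, M * ‖x - y‖ ^ 2 ≤ ⟪Φ x - Φ y, x - y⟫)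
    (hlip : ∀ x ∈ K, ∀ y ∈ K, ‖Φ x - Φ y‖ ≤ L * ‖x - y‖) (hε : 0 < ε)
    (hxsK : xs ∈ K) (hxs : P (xs - ε • Φ xs) = xs)
    (hm : m ≤ mΩ) (hY : Measurable[m] Y) (hYK : ∀ ω, Y ω ∈ K)
    (hunbiased : μ[G | m] =ᵐ[μ] fun ω => Φ (Y ω))
    (herrInt : Integrable (fun ω => ‖G ω - Φ (Y ω)‖ ^ 2) μ)
    (hYint : Integrable (fun ω => ‖Y ω - xs‖ ^ 2) μ) :
    Integrable (fun ω => ⟪(Y ω - ε • Φ (Y ω)) - (xs - ε • Φ xs), G ω - Φ (Y ω)⟫) μ ∧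
      ∫ ω, ⟪(Y ω - ε • Φ (Y ω)) - (xs - ε • Φ xs), G ω - Φ (Y ω)⟫ ∂μ = 0 := by
  by_cases hG : Integrable G μ
  · have hΦY : AEStronglyMeasurable[m] (fun ω => Φ (Y ω)) μ :=
      stronglyMeasurable_condExp.aestronglyMeasurable.congr hunbiased
    have hΦYint : Integrable (fun ω => Φ (Y ω)) μ := integrable_condExp.congr hunbiased
    have hYm : AEStronglyMeasurable[m] Y μ := by
      obtain ⟨g, hg, hΦg⟩ := hΦY
      refine aestronglyMeasurable_of_ae_mem_isSeparable hY
        (((isEmbedding_domRestrict_of_stronglyMonotoneOn hM hmono hlip).isSeparable_preimage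
          hg.isSeparable_range.closure).image continuous_subtype_val) ?_
      filter_upwards [hΦg] with ω hω
      exact ⟨⟨Y ω, hYK ω⟩, subset_closure ⟨ω, hω.symm⟩, rfl⟩
    have hD : AEStronglyMeasurable[m] (fun ω => (Y ω - ε • Φ (Y ω)) - (xs - ε • Φ xs)) μ :=
      (hYm.sub (hΦY.const_smul ε)).sub aestronglyMeasurable_const
    have he : Integrable (fun ω => G ω - Φ (Y ω)) μ := hG.sub hΦYint
    have he0 : μ[fun ω => G ω - Φ (Y ω) | m] =ᵐ[μ] 0 := by
      filter_upwards [condExp_sub hG hΦYint m, hunbiased,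
        condExp_of_aestronglyMeasurable' hm hΦY hΦYint] with ω hsub hG' hΦ'
      rw [show (fun ω => G ω - Φ (Y ω)) = G - fun ω => Φ (Y ω) from rfl, hsub, Pi.sub_apply,
        hG', hΦ', sub_self, Pi.zero_apply]
    have hinner : Integrable
        (fun ω => ⟪(Y ω - ε • Φ (Y ω)) - (xs - ε • Φ xs), G ω - Φ (Y ω)⟫) μ := by
      refine Integrable.mono'
        ((((hYint.const_mul (1 - 2 * ε * M + ε ^ 2 * L ^ 2)).add herrInt).div_const 2))
        ((hD.mono hm).inner he.aestronglyMeasurable) (Eventually.of_forall fun ω => ?_)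
      have hDsq := norm_sub_smul_sub_sq_le hε.le hmono hlip (hYK ω) hxsK
      rw [Real.norm_eq_abs, Pi.add_apply]
      refine (abs_real_inner_le_norm _ _).trans ?_
      nlinarith [two_mul_le_add_sq ‖(Y ω - ε • Φ (Y ω)) - (xs - ε • Φ xs)‖ ‖G ω - Φ (Y ω)‖]
    exact ⟨hinner, integral_inner_eq_zero_of_condExp_ae_eq_zero hm hD he hinner he0⟩
  -- Otherwise `μ[G | m] = 0` by convention, so `Φ ∘ Y = 0` a.e., which pins `Y` to `xs`.
  · rw [condExp_of_not_integrable hG] at hunbiased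
    have hzero : (fun ω => ⟪(Y ω - ε • Φ (Y ω)) - (xs - ε • Φ xs), G ω - Φ (Y ω)⟫) =ᵐ[μ] 0 := by
      filter_upwards [hunbiased] with ω hΦ
      rw [eq_of_stronglyMonotoneOn_of_map_eq_zero hM hmono (hYK ω) hxsK
        (hP.inner_nonneg_of_map_sub_smul_eq hε hxs (hYK ω)) hΦ.symm]
      simp
    exact ⟨(integrable_congr hzero).2 (integrable_zero _ _ _), integral_eq_zero_of_ae hzero⟩

theorem integral_norm_sub_sq_le_of_stochasticStep (hP : IsMetricProjection K P) (hM : 0 < M)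
    (hmono : ∀ x ∈ K, ∀ y ∈ K, M * ‖x - y‖ ^ 2 ≤ ⟪Φ x - Φ y, x - y⟫)
    (hlip : ∀ x ∈ K, ∀ y ∈ K, ‖Φ x - Φ y‖ ≤ L * ‖x - y‖) (hε : 0 < ε)
    (hxsK : xs ∈ K) (hxs : P (xs - ε • Φ xs) = xs)
    (hm : m ≤ mΩ) (hY : Measurable[m] Y) (hYK : ∀ ω, Y ω ∈ K)
    (hunbiased : μ[G | m] =ᵐ[μ] fun ω => Φ (Y ω))
    (herrInt : Integrable (fun ω => ‖G ω - Φ (Y ω)‖ ^ 2) μ)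
    (herr : ∫ ω, ‖G ω - Φ (Y ω)‖ ^ 2 ∂μ ≤ β)
    (hYint : Integrable (fun ω => ‖Y ω - xs‖ ^ 2) μ) {Z : Ω → E}
    (hZ : ∀ ω, Z ω = P (Y ω - ε • G ω)) (hZint : Integrable (fun ω => ‖Z ω - xs‖ ^ 2) μ) :
    ∫ ω, ‖Z ω - xs‖ ^ 2 ∂μ ≤
      (1 - 2 * ε * M + ε ^ 2 * L ^ 2) * ∫ ω, ‖Y ω - xs‖ ^ 2 ∂μ + ε ^ 2 * β := by
  obtain ⟨hcrossInt, hcross⟩ := integrable_and_integral_inner_step_err_eq_zero hP hM hmono hlip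
    hε hxsK hxs hm hY hYK hunbiased herrInt hYint
  have hYint' := hYint.const_mul (1 - 2 * ε * M + ε ^ 2 * L ^ 2)
  have hcrossInt' := hcrossInt.const_mul (2 * ε)
  have herrInt' := herrInt.const_mul (ε ^ 2)
  have hdiffInt : Integrable (fun ω => (1 - 2 * ε * M + ε ^ 2 * L ^ 2) * ‖Y ω - xs‖ ^ 2
      - 2 * ε * ⟪(Y ω - ε • Φ (Y ω)) - (xs - ε • Φ xs), G ω - Φ (Y ω)⟫) μ :=
    hYint'.sub hcrossInt'
  calc ∫ ω, ‖Z ω - xs‖ ^ 2 ∂μ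
      ≤ ∫ ω, ((1 - 2 * ε * M + ε ^ 2 * L ^ 2) * ‖Y ω - xs‖ ^ 2
          - 2 * ε * ⟪(Y ω - ε • Φ (Y ω)) - (xs - ε • Φ xs), G ω - Φ (Y ω)⟫
          + ε ^ 2 * ‖G ω - Φ (Y ω)‖ ^ 2) ∂μ :=
        integral_mono hZint (hdiffInt.add herrInt') fun ω => by
          rw [hZ]
          exact norm_proj_sub_sq_le hP hmono hlip hε.le hxsK hxs (hYK ω) (G ω)
    _ = (1 - 2 * ε * M + ε ^ 2 * L ^ 2) * ∫ ω, ‖Y ω - xs‖ ^ 2 ∂μ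
          + ε ^ 2 * ∫ ω, ‖G ω - Φ (Y ω)‖ ^ 2 ∂μ := by
        rw [integral_add hdiffInt herrInt', integral_sub hYint' hcrossInt',
          integral_const_mul, integral_const_mul, integral_const_mul, hcross]
        ring
    _ ≤ _ := by gcongr

end StochasticStep

theorem stochastic_projected_gradient_limsup_bound_general
    {E : Type*} [NormedAddCommGroup E] [InnerProductSpace ℝ E] [CompleteSpace E]
    [MeasurableSpace E] [BorelSpace E]
    (K : Set E)
    (P : E → E) (hP : IsMetricProjection K P)
    (Φ : E → E) (M L ε : ℝ) (hM : 0 < M) (hL : 0 < L)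
    (hmono : ∀ x ∈ K, ∀ y ∈ K, M * ‖x - y‖ ^ 2 ≤ ⟪Φ x - Φ y, x - y⟫)
    (hlip : ∀ x ∈ K, ∀ y ∈ K, ‖Φ x - Φ y‖ ≤ L * ‖x - y‖)
    (hε0 : 0 < ε) (hε : ε < 2 * M / L ^ 2)
    (xs : E) (hxsK : xs ∈ K) (hxs : P (xs - ε • Φ xs) = xs)
    {Ω : Type*} [MeasurableSpace Ω] (μ : Measure Ω) [IsProbabilityMeasure μ]
    (X : ℕ → Ω → E) (Ψ : ℕ → Ω → E → E) (β : ℝ)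
    (hXmeas : ∀ k, Measurable (X k))
    (hunbiased : ∀ k,
      μ[(fun ω => Ψ k ω (X k ω)) | MeasurableSpace.comap (X k) inferInstance]
        =ᵐ[μ] fun ω => Φ (X k ω))
    (herrInt : ∀ k, Integrable (fun ω => ‖Ψ k ω (X k ω) - Φ (X k ω)‖ ^ 2) μ)
    (herr : ∀ k, ∫ ω, ‖Ψ k ω (X k ω) - Φ (X k ω)‖ ^ 2 ∂μ ≤ β)
    (hXint : ∀ k, Integrable (fun ω => ‖X k ω - xs‖ ^ 2) μ)
    (hiter : ∀ k, ∀ ω, X (k + 1) ω = P (X k ω - ε • Ψ k ω (X k ω))) :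
    Filter.limsup (fun k : ℕ => ∫ ω, ‖X k ω - xs‖ ^ 2 ∂μ) Filter.atTop ≤
      ε ^ 2 * β / (2 * ε * M - ε ^ 2 * L ^ 2) := by
  have hXK : ∀ k ω, X (k + 1) ω ∈ K := fun k ω => hiter k ω ▸ hP.mem _
  have hden : 0 < 2 * ε * M - ε ^ 2 * L ^ 2 := by
    rw [lt_div_iff₀ (by positivity)] at hε
    nlinarith
  rw [← limsup_nat_add _ 1]
  -- `c = 1 - 2εM + ε²L² ≥ 0` needs `M ≤ L`, which needs a second point of `K`.
  by_cases hK : ∀ x ∈ K, x = xs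
  · have hβ : 0 ≤ β := (integral_nonneg fun ω => by positivity).trans (herr 0)
    have hzero : (fun k => ∫ ω, ‖X (k + 1) ω - xs‖ ^ 2 ∂μ) = fun _ => 0 := by
      funext k
      simp [hK _ (hXK k _)]
    rw [hzero, limsup_const]
    exact div_nonneg (by positivity) hden.le
  push Not at hK
  obtain ⟨y, hyK, hyxs⟩ := hK
  have hML := le_of_stronglyMonotoneOn_of_lipschitzOn hmono hlip hyK hxsK hyxs
  have hc0 : 0 ≤ 1 - 2 * ε * M + ε ^ 2 * L ^ 2 := by
    nlinarith [sq_nonneg (1 - ε * M), mul_le_mul hML hML hM.le hL.le]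
  have hstep : ∀ k, ∫ ω, ‖X (k + 1 + 1) ω - xs‖ ^ 2 ∂μ ≤
      (1 - 2 * ε * M + ε ^ 2 * L ^ 2) * ∫ ω, ‖X (k + 1) ω - xs‖ ^ 2 ∂μ + ε ^ 2 * β := fun k =>
    integral_norm_sub_sq_le_of_stochasticStep hP hM hmono hlip hε0 hxsK hxs
      (hXmeas (k + 1)).comap_le (Measurable.of_comap_le le_rfl) (hXK k) (hunbiased (k + 1))
      (herrInt (k + 1)) (herr (k + 1)) (hXint (k + 1)) (hiter (k + 1)) (hXint (k + 1 + 1))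
  calc limsup (fun k => ∫ ω, ‖X (k + 1) ω - xs‖ ^ 2 ∂μ) atTop
      ≤ ε ^ 2 * β / (1 - (1 - 2 * ε * M + ε ^ 2 * L ^ 2)) :=
        limsup_le_div_of_le_mul_add (fun k => integral_nonneg fun ω => by positivity)
          hc0 (by linarith) hstep
    _ = ε ^ 2 * β / (2 * ε * M - ε ^ 2 * L ^ 2) := by ring_nf

/-- Theorem 2 (stochastic limsup bound): the stochastic projected gradient iteration
`X^{k+1} = proj_K(X^k - εΨ_k(X^k))` with conditionally unbiased gradient errors of
mean-square at most `β` satisfies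
`lim sup_{k→∞} E[‖X^k - x*‖²] ≤ ε²β / (2εM - ε²L²) = β / (2M/ε - L²)`. -/
theorem stochastic_projected_gradient_limsup_bound
    {E : Type*} [NormedAddCommGroup E] [InnerProductSpace ℝ E] [CompleteSpace E]
    [MeasurableSpace E] [BorelSpace E]
    (K : Set E) (hne : K.Nonempty) (hcl : IsClosed K) (hconv : Convex ℝ K)
    (P : E → E) (hP : IsMetricProjection K P)
    (Φ : E → E) (M L ε : ℝ) (hM : 0 < M) (hL : 0 < L)
    (hmono : ∀ x ∈ K, ∀ y ∈ K, M * ‖x - y‖ ^ 2 ≤ ⟪Φ x - Φ y, x - y⟫)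
    (hlip : ∀ x ∈ K, ∀ y ∈ K, ‖Φ x - Φ y‖ ≤ L * ‖x - y‖)
    (hε0 : 0 < ε) (hε : ε < 2 * M / L ^ 2)
    (xs : E) (hxsK : xs ∈ K) (hxs : P (xs - ε • Φ xs) = xs)
    {Ω : Type*} [MeasurableSpace Ω] (μ : Measure Ω) [IsProbabilityMeasure μ]
    (X : ℕ → Ω → E) (Ψ : ℕ → Ω → E → E) (β : ℝ)
    (hXmeas : ∀ k, Measurable (X k))
    (hΨmeas : ∀ k, Measurable fun ω => Ψ k ω (X k ω))
    (hunbiased : ∀ k,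
      μ[(fun ω => Ψ k ω (X k ω)) | MeasurableSpace.comap (X k) inferInstance]
        =ᵐ[μ] fun ω => Φ (X k ω))
    (herrInt : ∀ k, Integrable (fun ω => ‖Ψ k ω (X k ω) - Φ (X k ω)‖ ^ 2) μ)
    (herr : ∀ k, ∫ ω, ‖Ψ k ω (X k ω) - Φ (X k ω)‖ ^ 2 ∂μ ≤ β)
    (hXint : ∀ k, Integrable (fun ω => ‖X k ω - xs‖ ^ 2) μ)
    (hiter : ∀ k, ∀ ω, X (k + 1) ω = P (X k ω - ε • Ψ k ω (X k ω))) :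
    Filter.limsup (fun k : ℕ => ∫ ω, ‖X k ω - xs‖ ^ 2 ∂μ) Filter.atTop ≤
      ε ^ 2 * β / (2 * ε * M - ε ^ 2 * L ^ 2) :=
  stochastic_projected_gradient_limsup_bound_general K P hP Φ M L ε hM hL hmono hlip hε0 hε xs hxsK
    hxs μ X Ψ β hXmeas hunbiased herrInt herr hXint hiter
end
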